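/- arXiv:2210.02013 — 5 statements merged into one kernel-verified Lean document; each statement's English description precedes it below -/
import Mathlib

section
/- Let Λ be the Iwasawa algebra O[[T]] over the ring of integers O of a finite extension of Q_p (a 2-dimensional regular local ring). If I ⊆ A are ideals of Λ with A of finite index in Λ (as an O-module quotient Λ/A is finite), then I ⊆ Fitt_Λ(A/I). -/
/-!
Identify `Λ` with `O⟦X⟧`; `O` is a PID, being a semilocal Dedekind domain. Since `Λ / A` is
finite and `X` lies in the Jacobson radical, `X ^ k ∈ A` for some `k`. Then `A / (X ^ k)` is a
free `O`-module of some rank `n ≤ k` on which `X` acts nilpotently, say with matrix `t` in a basis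
lifted to `g₁, …, gₙ ∈ A`. So `A` is generated by `G = (X ^ k, g₁, …, gₙ)`, and the relations
`X gᵢ - ∑ⱼ tⱼᵢ gⱼ - hᵢ X ^ k = 0` form an `n × (n + 1)` matrix `Q` whose block `X - tᵀ` has
determinant `charpoly t (X) = X ^ n`. By Cramer's rule `G` is `X ^ (k - n)` times the vector of
signed maximal minors of `Q`, as in the Hilbert–Burch theorem. Hence every `x = ∑ cⱼ Gⱼ ∈ I`
equals `X ^ (k - n) · det [c; Q]`, and `[c; Q]` is a matrix of relations of `A / I` in `G`.
-/

/-- The 0-th Fitting ideal of a module `M` over a commutative ring `R`: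
the ideal generated by determinants of square matrices of relations among
a finite generating set of `M`. -/
def fittingIdeal (R : Type*) [CommRing R] (M : Type*) [AddCommGroup M] [Module R M] :
    Ideal R :=
  Ideal.span { d : R | ∃ (n : ℕ) (π : ((Fin n → R) →ₗ[R] M))
    (A : Matrix (Fin n) (Fin n) R),
      Function.Surjective π ∧ (∀ i, π (A i) = 0) ∧ d = A.det }

open Matrix

namespace Matrix

variable {R : Type*} [CommRing R] {n : ℕ}

/-- Signed so that expanding `det [c; Q]` along its first row gives `∑ j, c j * Q.maxMinors j`. -/
def maxMinors (Q : Matrix (Fin n) (Fin (n + 1)) R) (j : Fin (n + 1)) : R :=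
  (-1) ^ (j : ℕ) * (Q.submatrix id j.succAbove).det

theorem maxMinors_zero (Q : Matrix (Fin n) (Fin (n + 1)) R) :
    Q.maxMinors 0 = (Q.submatrix id Fin.succ).det := by
  simp [maxMinors, Fin.succAbove_zero]

theorem det_of_cons_eq_sum_maxMinors (c : Fin (n + 1) → R)
    (Q : Matrix (Fin n) (Fin (n + 1)) R) :
    (of (Fin.cons c Q : Fin (n + 1) → Fin (n + 1) → R)).det = ∑ j, c j * Q.maxMinors j := by
  rw [det_succ_row_zero]
  refine Finset.sum_congr rfl fun j _ => ?_
  rw [maxMinors, mul_left_comm, mul_assoc]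
  rfl

theorem mulVec_maxMinors (Q : Matrix (Fin n) (Fin (n + 1)) R) : Q *ᵥ Q.maxMinors = 0 := by
  funext i
  rw [mulVec, dotProduct, ← det_of_cons_eq_sum_maxMinors]
  exact det_zero_of_row_eq (Fin.succ_ne_zero i).symm rfl

theorem maxMinors_map {S : Type*} [CommRing S] (f : R →+* S)
    (Q : Matrix (Fin n) (Fin (n + 1)) R) : (Q.map f).maxMinors = f ∘ Q.maxMinors := by
  funext j
  simp only [maxMinors, Function.comp_apply, map_mul, map_pow, map_neg, map_one, RingHom.map_det]
  rfl

theorem eq_smul_maxMinors_of_mulVec_eq_zero {Q : Matrix (Fin n) (Fin (n + 1)) R}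
    {G : Fin (n + 1) → R} (a : R) (hQG : Q *ᵥ G = 0) (hG : G 0 = a * Q.maxMinors 0)
    (hQ : Q.maxMinors 0 ∈ nonZeroDivisors R) : G = a • Q.maxMinors := by
  set u := G - a • Q.maxMinors with hu
  have hu0 : u 0 = 0 := by simp [u, hG]
  have hQu : Q *ᵥ u = 0 := by simp [u, mulVec_sub, mulVec_smul, mulVec_maxMinors, hQG]
  have hB : Q.submatrix id Fin.succ *ᵥ Fin.tail u = 0 := by
    rw [← hQu]
    funext i
    simp [mulVec, dotProduct, Fin.sum_univ_succ (n := n), hu0, Fin.tail]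
  have htail := eq_zero_of_det_mem_nonZeroDivisors_of_mulVec_eq_zero (Q.maxMinors_zero ▸ hQ) hB
  rw [← sub_eq_zero, ← hu, ← Fin.cons_self_tail u, hu0, htail]
  exact cons_zero_zero

end Matrix

theorem det_mem_fittingIdeal_of_mulVec_mem {R : Type*} [CommRing R] {I A : Ideal R} {m : ℕ}
    {G : Fin m → R} (hA : A = Ideal.span (Set.range G)) (M : Matrix (Fin m) (Fin m) R)
    (hM : ∀ i, (M *ᵥ G) i ∈ I) :
    M.det ∈ fittingIdeal R (A ⧸ Submodule.comap A.subtype I) := by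
  let G' : Fin m → A := fun j => ⟨G j, hA ▸ Ideal.subset_span ⟨j, rfl⟩⟩
  have hG' : ∀ v, (Fintype.linearCombination R G' v : R) = ∑ j, v j * G j := by
    intro v
    simp [G', Fintype.linearCombination_apply]
  let π := (Submodule.comap A.subtype I).mkQ ∘ₗ Fintype.linearCombination R G'
  refine Ideal.subset_span ⟨m, π, M, ?_, fun i => ?_, rfl⟩
  · rintro ⟨⟨a, ha⟩⟩
    obtain ⟨c, hc⟩ := (Submodule.mem_span_range_iff_exists_fun R).mp (hA ▸ ha)
    exact ⟨c, congrArg _ (Subtype.ext ((hG' c).trans (by simpa using hc)))⟩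
  · rw [LinearMap.comp_apply, Submodule.mkQ_apply, Submodule.Quotient.mk_eq_zero,
      Submodule.mem_comap, Submodule.subtype_apply, hG']
    exact hM i

namespace Ideal

variable {R : Type*} [CommRing R]

/-- The shape `A = a · Iₙ(Q)` that the Hilbert–Burch theorem gives to an ideal with a free
resolution `0 → Rⁿ → Rⁿ⁺¹ → A → 0` whose second map has matrix `Q`. -/
def IsHilbertBurch (A : Ideal R) : Prop :=
  ∃ (n : ℕ) (Q : Matrix (Fin n) (Fin (n + 1)) R) (a : R), A = span (Set.range (a • Q.maxMinors))

theorem IsHilbertBurch.map {S : Type*} [CommRing S] {A : Ideal R} (hA : A.IsHilbertBurch)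
    (f : R →+* S) : (A.map f).IsHilbertBurch := by
  obtain ⟨n, Q, a, rfl⟩ := hA
  refine ⟨n, Q.map f, f a, ?_⟩
  rw [map_span, ← Set.range_comp, Matrix.maxMinors_map]
  congr
  funext j
  simp

theorem IsHilbertBurch.le_fittingIdeal {I A : Ideal R} (hA : A.IsHilbertBurch) (hIA : I ≤ A) :
    I ≤ fittingIdeal R (A ⧸ Submodule.comap A.subtype I) := by
  obtain ⟨n, Q, a, hAQ⟩ := hA
  intro x hx
  obtain ⟨c, hc⟩ := (Submodule.mem_span_range_iff_exists_fun R).mp (hAQ ▸ hIA hx)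
  have hx_eq : x = a * (of (Fin.cons c Q : Fin (n + 1) → Fin (n + 1) → R)).det := by
    rw [det_of_cons_eq_sum_maxMinors, ← hc, Finset.mul_sum]
    exact Finset.sum_congr rfl fun j _ => by simp only [Pi.smul_apply, smul_eq_mul]; ring
  rw [hx_eq]
  refine mul_mem_left _ a (det_mem_fittingIdeal_of_mulVec_mem hAQ _ fun i => ?_)
  refine Fin.cases ?_ (fun i => ?_) i
  · change ∑ j, c j * (a • Q.maxMinors) j ∈ I
    rw [← hc] at hx
    simpa only [smul_eq_mul] using hx
  · change (Q *ᵥ (a • Q.maxMinors)) i ∈ I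
    rw [mulVec_smul, Q.mulVec_maxMinors, smul_zero]
    exact I.zero_mem

theorem exists_pow_mem_of_mem_jacobson_bot (A : Ideal R) [Finite (R ⧸ A)] {x : R}
    (hx : x ∈ (⊥ : Ideal R).jacobson) : ∃ k, x ^ k ∈ A := by
  have hx' : Quotient.mk A x ∈ (⊥ : Ideal (R ⧸ A)).jacobson := by
    rw [mem_jacobson_bot] at hx ⊢
    intro y
    obtain ⟨y, rfl⟩ := Quotient.mk_surjective y
    simpa using (hx y).map (Quotient.mk A)
  obtain ⟨k, hk⟩ := IsArtinianRing.isNilpotent_jacobson_bot (R := R ⧸ A)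
  refine ⟨k, Quotient.eq_zero_iff_mem.mp ?_⟩
  rw [map_pow, ← mem_bot, ← zero_eq_bot, ← hk]
  exact pow_mem_pow hx' k

end Ideal

namespace PowerSeries

variable {O : Type*} [CommRing O]

theorem X_mem_jacobson_bot : (X : O⟦X⟧) ∈ (⊥ : Ideal O⟦X⟧).jacobson :=
  Ideal.mem_jacobson_bot.mpr fun y => by simp [isUnit_iff_constantCoeff]

theorem mem_span_X_pow_of_C_mul_mem [NoZeroDivisors O] {k : ℕ} {o : O} (ho : o ≠ 0)
    {f : O⟦X⟧} (h : C o * f ∈ Ideal.span {X ^ k}) : f ∈ Ideal.span {(X : O⟦X⟧) ^ k} := by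
  rw [Ideal.mem_span_singleton, X_pow_dvd_iff] at h ⊢
  intro m hm
  simpa [ho] using h m hm

instance [IsDomain O] (k : ℕ) :
    Module.IsTorsionFree O (O⟦X⟧ ⧸ Ideal.span {(X : O⟦X⟧) ^ k}) := by
  refine .of_smul_eq_zero fun o y hoy => or_iff_not_imp_left.mpr fun ho => ?_
  obtain ⟨f, rfl⟩ := Ideal.Quotient.mk_surjective y
  rw [← Ideal.Quotient.mkₐ_eq_mk O, ← map_smul, Ideal.Quotient.mkₐ_eq_mk,
    Ideal.Quotient.eq_zero_iff_mem, smul_eq_C_mul] at hoy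
  exact Ideal.Quotient.eq_zero_iff_mem.mpr (mem_span_X_pow_of_C_mul_mem ho hoy)

theorem span_mk_X_pow_eq_top (k : ℕ) :
    Submodule.span O (Set.range fun i : Fin k =>
      Ideal.Quotient.mk (Ideal.span {(X : O⟦X⟧) ^ k}) (X ^ (i : ℕ))) = ⊤ := by
  refine eq_top_iff.mpr fun y _ => ?_
  obtain ⟨f, rfl⟩ := Ideal.Quotient.mk_surjective y
  refine (Submodule.mem_span_range_iff_exists_fun O).mpr ⟨fun i => coeff (i : ℕ) f, ?_⟩
  simp only [← Ideal.Quotient.mkₐ_eq_mk O, ← map_smul, ← map_sum]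
  rw [Ideal.Quotient.mkₐ_eq_mk, Ideal.Quotient.eq, Ideal.mem_span_singleton, X_pow_dvd_iff]
  intro m hm
  simp [smul_eq_C_mul, Fin.sum_univ_eq_sum_range (fun i => if m = i then coeff i f else 0), hm]

instance (k : ℕ) : Module.Finite O (O⟦X⟧ ⧸ Ideal.span {(X : O⟦X⟧) ^ k}) :=
  ⟨by rw [← span_mk_X_pow_eq_top k]; exact Submodule.fg_span (Set.finite_range _)⟩

theorem finrank_quotient_X_pow_le [StrongRankCondition O] (k : ℕ) :
    Module.finrank O (O⟦X⟧ ⧸ Ideal.span {(X : O⟦X⟧) ^ k}) ≤ k := by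
  have := finrank_range_le_card (R := O) fun i : Fin k =>
    Ideal.Quotient.mk (Ideal.span {(X : O⟦X⟧) ^ k}) (X ^ (i : ℕ))
  rwa [Set.finrank, span_mk_X_pow_eq_top, finrank_top, Fintype.card_fin] at this

variable [IsDomain O] [IsPrincipalIdealRing O]

/-- `g` lifts an `O`-basis of `A / (X ^ k)` and `t` is the matrix of multiplication by `X` in it. -/
theorem exists_generators_of_X_pow_mem {A : Ideal O⟦X⟧} {k : ℕ} (hk : X ^ k ∈ A) :
    ∃ (n : ℕ) (g : Fin n → O⟦X⟧) (t : Matrix (Fin n) (Fin n) O) (h : Fin n → O⟦X⟧),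
      n ≤ k ∧ t.charpoly = Polynomial.X ^ n ∧
      A = Ideal.span (Set.range (Fin.cons (X ^ k) g : Fin (n + 1) → O⟦X⟧)) ∧
      ∀ i, X * g i = ∑ j, C (t j i) * g j + h i * X ^ k := by
  set J := Ideal.span {(X : O⟦X⟧) ^ k}
  let S : Submodule O (O⟦X⟧ ⧸ J) := (A.map (Ideal.Quotient.mk J)).restrictScalars O
  let b := Module.finBasis O S
  let φ : Module.End O S := Module.toModuleEnd O (S := O⟦X⟧ ⧸ J) S (Ideal.Quotient.mk J X)
  have hφ : IsNilpotent φ := ⟨k, by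
    rw [← map_pow, ← map_pow,
      Ideal.Quotient.eq_zero_iff_mem.mpr (Ideal.mem_span_singleton_self _), map_zero]⟩
  choose g hgA hg using fun j =>
    (Ideal.mem_map_iff_of_surjective _ Ideal.Quotient.mk_surjective).mp (b j).2
  have hlift : ∀ c : Fin (Module.finrank O S) → O,
      Ideal.Quotient.mk J (∑ j, C (c j) * g j) = ((∑ j, c j • b j : S) : O⟦X⟧ ⧸ J) := by
    intro c
    simp only [← smul_eq_C_mul, map_sum, Submodule.coe_sum, Submodule.coe_smul, ← hg]
    exact Finset.sum_congr rfl fun j _ => map_smul (Ideal.Quotient.mkₐ O J) _ _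
  set t := LinearMap.toMatrix b b φ
  have hrel : ∀ i, X * g i - ∑ j, C (t j i) * g j ∈ J := by
    intro i
    rw [← Ideal.Quotient.eq, hlift, ← Matrix.toLin_self b b t i, Matrix.toLin_toMatrix,
      map_mul, hg]
    rfl
  choose h hh using fun i => Ideal.mem_span_singleton'.mp (hrel i)
  refine ⟨_, g, t, h, (Submodule.finrank_le S).trans (finrank_quotient_X_pow_le k),
    (LinearMap.charpoly_toMatrix φ b).trans hφ.charpoly_eq_X_pow_finrank, ?_,
    fun i => by rw [hh, add_sub_cancel]⟩
  refine le_antisymm (fun a ha => ?_) (Ideal.span_le.mpr ?_)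
  · have haS : Ideal.Quotient.mk J a ∈ S := Ideal.mem_map_of_mem _ ha
    set c := b.repr ⟨_, haS⟩
    obtain ⟨r, hr⟩ := Ideal.mem_span_singleton'.mp <| Ideal.Quotient.eq.mp <|
      (congrArg Subtype.val (b.sum_repr ⟨_, haS⟩)).symm.trans (hlift c).symm
    rw [← sub_add_cancel a (∑ j, C (c j) * g j), ← hr]
    exact add_mem (Ideal.mul_mem_left _ _ (Ideal.subset_span ⟨0, rfl⟩))
      (sum_mem fun j _ => Ideal.mul_mem_left _ _ (Ideal.subset_span ⟨j.succ, rfl⟩))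
  · rintro _ ⟨j, rfl⟩
    exact Fin.cases hk hgA j

theorem isHilbertBurch_of_X_pow_mem {A : Ideal O⟦X⟧} {k : ℕ} (hk : X ^ k ∈ A) :
    A.IsHilbertBurch := by
  obtain ⟨n, g, t, h, hnk, ht, hA, hXg⟩ := exists_generators_of_X_pow_mem hk
  let Q : Matrix (Fin n) (Fin (n + 1)) O⟦X⟧ :=
    of fun i => Fin.cons (-h i) fun j => (t.charmatrix j i : O⟦X⟧)
  have hQ : Q.maxMinors 0 = X ^ n := by
    have : Q.submatrix id Fin.succ = (t.charmatrix.map Polynomial.coeToPowerSeries.ringHom)ᵀ :=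
      rfl
    rw [maxMinors_zero, this, det_transpose, ← RingHom.mapMatrix_apply, ← RingHom.map_det]
    change ((t.charpoly : Polynomial O) : O⟦X⟧) = X ^ n
    rw [ht, Polynomial.coe_pow, Polynomial.coe_X]
  have hQG : Q *ᵥ Fin.cons (X ^ k) g = 0 := by
    funext i
    simp only [mulVec, dotProduct, Fin.sum_univ_succ, Q, of_apply, Fin.cons_zero,
      Fin.cons_succ, charmatrix_apply, diagonal_apply, Polynomial.coe_sub,
      Polynomial.coe_C, apply_ite, Polynomial.coe_X, Polynomial.coe_zero, ite_mul, zero_mul,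
      sub_mul, Finset.sum_sub_distrib, Finset.sum_ite_eq', Finset.mem_univ, if_true, hXg,
      Pi.zero_apply]
    ring
  have hXk : X ^ k = X ^ (k - n) * Q.maxMinors 0 := by
    rw [hQ, ← pow_add, Nat.sub_add_cancel hnk]
  refine ⟨n, Q, X ^ (k - n), hA.trans ?_⟩
  rw [eq_smul_maxMinors_of_mulVec_eq_zero _ hQG hXk
    (hQ ▸ pow_mem (mem_nonZeroDivisors_of_ne_zero X_ne_zero) n)]

end PowerSeries

/-- The integral closure is a Dedekind domain with finitely many primes: `⊥` and those above the
maximal ideal of `R`. -/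
theorem IsDiscreteValuationRing.isPrincipalIdealRing_integralClosure (R F L : Type*)
    [CommRing R] [IsDomain R] [IsDiscreteValuationRing R] [Field F] [Algebra R F]
    [IsFractionRing R F] [Field L] [Algebra F L] [Algebra R L] [IsScalarTower R F L]
    [FiniteDimensional F L] [Algebra.IsSeparable F L] :
    IsPrincipalIdealRing (integralClosure R L) := by
  have : IsDedekindDomain (integralClosure R L) := IsIntegralClosure.isDedekindDomain R F L _
  have : Module.IsTorsionFree R (integralClosure R L) := by
    refine Module.isTorsionFree_iff_algebraMap_injective.mpr
      (Function.Injective.of_comp (f := Subtype.val) ?_)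
    change Function.Injective (algebraMap R L)
    rw [IsScalarTower.algebraMap_eq R F L]
    exact (algebraMap F L).injective.comp (IsFractionRing.injective R F)
  refine IsPrincipalIdealRing.of_finite_primes <|
    ((IsDedekindDomain.primesOver_finite (IsLocalRing.maximalIdeal R) _).insert ⊥).subset ?_
  intro P hP
  rcases eq_or_ne P ⊥ with hP0 | hP0
  · exact Or.inl hP0
  have : P.IsPrime := hP
  have hmax := Ideal.IsPrime.isMaximal (Ideal.IsPrime.comap (algebraMap R _))
    (mt Ideal.eq_bot_of_comap_eq_bot hP0)
  exact Or.inr ⟨hP, ⟨(IsLocalRing.eq_maximalIdeal hmax).symm⟩⟩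

/-- Let `Λ = O[[T]]` with `O` the ring of integers of a finite extension of `ℚ_p`.
If `I ⊆ A` are ideals of `Λ` with `A` of finite index in `Λ`, then
`I ⊆ Fitt_Λ(A/I)`. -/
theorem stmt0 (p : ℕ) [Fact p.Prime] (K : Type*) [Field K]
    [Algebra ℚ_[p] K] [FiniteDimensional ℚ_[p] K]
    [Algebra ℤ_[p] K] [IsScalarTower ℤ_[p] ℚ_[p] K]
    (Λ : Type*) [CommRing Λ]
    (e : Λ ≃+* PowerSeries (integralClosure ℤ_[p] K))
    (I A : Ideal Λ) (hIA : I ≤ A) (hfin : Finite (Λ ⧸ A)) :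
    I ≤ fittingIdeal Λ (↥A ⧸ (Submodule.comap A.subtype I)) := by
  have : IsPrincipalIdealRing (integralClosure ℤ_[p] K) :=
    IsDiscreteValuationRing.isPrincipalIdealRing_integralClosure ℤ_[p] ℚ_[p] K
  have := Finite.of_equiv (Λ ⧸ A) (Ideal.quotientEquiv A _ e rfl).toEquiv
  obtain ⟨k, hk⟩ := (A.map (e : Λ →+* _)).exists_pow_mem_of_mem_jacobson_bot
    (PowerSeries.X_mem_jacobson_bot (O := integralClosure ℤ_[p] K))
  have hA := (PowerSeries.isHilbertBurch_of_X_pow_mem hk).map (e.symm : _ →+* Λ)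
  rw [Ideal.map_of_equiv] at hA
  exact hA.le_fittingIdeal hIA
end

section
/- Let ε denote the element of the tilt Ẽ⁺ = lim_{x↦x^p} O_{C_p}/p given by a compatible system of primitive p-power roots of unity. Then the valuation of ε − 1 in Ẽ⁺ equals p/(p−1), and in particular is positive, so Ẽ = Ẽ⁺[(ε−1)^{-1}] is the fraction field of Ẽ⁺. -/
open scoped NNReal

theorem stmt8_fact_not_isUnit (p : ℕ) (K : Type*) [Field K] (v : Valuation K ℝ≥0)
    (O : Type*) [CommRing O] [Algebra O K] (hv : v.Integers O) [hvp : Fact (v p ≠ 1)] :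
    Fact ¬IsUnit (p : O) :=
  Fact.mk <| mt hv.one_of_isUnit <| (map_natCast (algebraMap O K) p).symm ▸ hvp.1

/-!
The cyclotomic identity `p = ∏ (1 - μ)` over the primitive `p²`-th roots of unity `μ`, all of
which have the same valuation distance to `1`, gives `v (ζ_{p²} - 1) ^ (p (p - 1)) = v p`.
In particular `v p < v (ζ_{p²} - 1)`, so the coefficient of index `2` of `ε - 1` is the nonzero
class of `ζ_{p²} - 1` in `O/p`, and `val (ε - 1) = v (ζ_{p²} - 1) ^ p² = v p ^ (p / (p - 1))`.

For the fraction field, `Ẽ⁺` is a valuation ring for `val`: if `val g ≤ val f` then the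
coefficientwise quotients `c n` of `g` by `f` in `O/p` are only defined up to the annihilator of
`f_n`, but as soon as `f_n² ≠ 0` that ambiguity dies after raising to the `p`-th power, so the
`c (n + 1) ^ p` form a compatible system giving `g / f`. Since `val (ε - 1) < 1`, every nonzero
element then divides a power of `ε - 1`.
-/

namespace Valuation

variable {K Γ₀ : Type*} [Field K] [LinearOrderedCommGroupWithZero Γ₀] (v : Valuation K Γ₀)

theorem map_pow_sub_one_le {a : K} (ha : v a ≤ 1) (j : ℕ) : v (a ^ j - 1) ≤ v (a - 1) :=
  calc v (a ^ j - 1) = v (∑ i ∈ Finset.range j, a ^ i) * v (a - 1) := by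
        rw [← v.map_mul, geom_sum_mul]
    _ ≤ v (a - 1) :=
        mul_le_of_le_one_left' (v.map_sum_le fun i _ => by rw [map_pow]; exact pow_le_one' ha i)

theorem map_eq_one_of_pow_eq_one {ζ : K} {n : ℕ} (hn : n ≠ 0) (hζ : ζ ^ n = 1) :
    v ζ = 1 := by
  simpa [hn] using congrArg v hζ

end Valuation

namespace IsPrimitiveRoot

variable {K Γ₀ : Type*} [Field K] [LinearOrderedCommGroupWithZero Γ₀] (v : Valuation K Γ₀)

theorem valuation_sub_one_eq {n : ℕ} [NeZero n] {ζ μ : K} (hζ : IsPrimitiveRoot ζ n)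
    (hμ : IsPrimitiveRoot μ n) : v (μ - 1) = v (ζ - 1) := by
  have hv : ∀ {ξ : K}, IsPrimitiveRoot ξ n → v ξ ≤ 1 := fun hξ =>
    (v.map_eq_one_of_pow_eq_one (NeZero.ne n) hξ.pow_eq_one).le
  obtain ⟨i, -, rfl⟩ := hζ.eq_pow_of_pow_eq_one hμ.pow_eq_one
  obtain ⟨j, -, hj⟩ := hμ.eq_pow_of_pow_eq_one hζ.pow_eq_one
  refine le_antisymm (v.map_pow_sub_one_le (hv hζ) i) ?_
  conv_lhs => rw [← hj]
  exact v.map_pow_sub_one_le (hv hμ) j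

theorem valuation_sub_one_pow {p k : ℕ} [hp : Fact p.Prime] {ζ : K}
    (hζ : IsPrimitiveRoot ζ (p ^ (k + 1))) : v (ζ - 1) ^ (p ^ k * (p - 1)) = v p := by
  have : NeZero (p ^ (k + 1)) := ⟨pow_ne_zero _ hp.out.ne_zero⟩
  have hprod : (p : K) = ∏ μ ∈ primitiveRoots (p ^ (k + 1)) K, (1 - μ) := by
    rw [← Polynomial.eval_one_cyclotomic_prime_pow (R := K) k,
      Polynomial.cyclotomic_eq_prod_X_sub_primitiveRoots hζ, Polynomial.eval_prod]
    simp
  rw [hprod, map_prod, ← Nat.totient_prime_pow_succ hp.out, ← hζ.card_primitiveRoots,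
    ← Finset.prod_const]
  refine Finset.prod_congr rfl fun μ hμ => ?_
  rw [← neg_sub μ 1, v.map_neg,
    valuation_sub_one_eq v hζ ((mem_primitiveRoots (NeZero.pos _)).mp hμ)]

theorem valuation_sub_one_lt_one {p k : ℕ} [Fact p.Prime] {ζ : K}
    (hζ : IsPrimitiveRoot ζ (p ^ (k + 1))) (hvp : v p ≠ 1) : v (ζ - 1) < 1 := by
  have hζ1 : v ζ = 1 :=
    v.map_eq_one_of_pow_eq_one (pow_ne_zero _ (Fact.out : p.Prime).ne_zero) hζ.pow_eq_one
  refine (v.map_sub_le hζ1.le v.map_one.le).lt_of_ne fun h => hvp ?_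
  rw [← hζ.valuation_sub_one_pow v, h, one_pow]

end IsPrimitiveRoot

theorem NNReal.pow_eq_rpow_div_of_pow_eq {x y : ℝ≥0} {m : ℕ} (hm : m ≠ 0) (h : x ^ m = y)
    (n : ℕ) : x ^ n = y ^ ((n : ℝ) / m) := by
  rw [← h, ← rpow_natCast x m, ← rpow_mul, mul_div_cancel₀ _ (Nat.cast_ne_zero.2 hm),
    rpow_natCast]

theorem IsLocalization.exists_mul_pow_eq_algebraMap {R S : Type*} [CommRing R] [CommRing S]
    [Algebra R S] {M : Submonoid R} [IsLocalization M S] {θ : R}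
    (h : ∀ s ∈ M, ∃ n, s ∣ θ ^ n) (x : S) :
    ∃ (a : R) (n : ℕ), x * algebraMap R S θ ^ n = algebraMap R S a := by
  obtain ⟨⟨r, s⟩, hx⟩ := IsLocalization.surj M x
  obtain ⟨n, t, ht⟩ := h s s.2
  refine ⟨r * t, n, ?_⟩
  rw [← map_pow, ht, map_mul, ← mul_assoc, hx, map_mul]

namespace ModP

variable {K : Type*} [Field K] {v : Valuation K ℝ≥0} {O : Type*} [CommRing O] [Algebra O K]
  (hv : v.Integers O) {p : ℕ}
include hv

theorem dvd_of_preVal_le {x y : ModP O p} (hx : x ≠ 0)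
    (h : preVal K v O p y ≤ preVal K v O p x) : x ∣ y := by
  obtain rfl | hy := eq_or_ne y 0
  · exact dvd_zero x
  obtain ⟨a, rfl⟩ := Ideal.Quotient.mk_surjective x
  obtain ⟨b, rfl⟩ := Ideal.Quotient.mk_surjective y
  rw [preVal_mk hv hx, preVal_mk hv hy] at h
  exact map_dvd _ (hv.dvd_of_le h)

/-- On lifts `a, b ∈ O`, `v a * v b ≤ v p < (v a)²` forces `v b ≤ v a`, hence `(v b)² ≤ v p`.
-/
theorem sq_eq_zero_of_mul_eq_zero {x y : ModP O p} (hxy : x * y = 0) (hx : x ^ 2 ≠ 0) :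
    y ^ 2 = 0 := by
  obtain ⟨a, rfl⟩ := Ideal.Quotient.mk_surjective x
  obtain ⟨b, rfl⟩ := Ideal.Quotient.mk_surjective y
  rw [← map_mul] at hxy
  rw [← map_pow] at hx ⊢
  rw [← v_p_lt_val hv, map_pow, v.map_pow] at hx
  rw [Ideal.Quotient.eq_zero_iff_mem, Ideal.mem_span_singleton] at hxy ⊢
  have hab := hv.le_of_dvd hxy
  rw [map_natCast, map_mul, v.map_mul] at hab
  refine hv.dvd_of_le ?_
  rw [map_natCast, map_pow, v.map_pow]
  set A := v (algebraMap O K a)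
  set B := v (algebraMap O K b)
  have hBA : B ≤ A := by
    by_contra! h
    exact (hab.trans_lt hx).not_ge (by rw [sq]; gcongr)
  calc B ^ 2 ≤ A * B := by rw [sq]; gcongr
    _ ≤ v p := hab

end ModP

namespace PreTilt

variable {K : Type*} [Field K] {v : Valuation K ℝ≥0} {O : Type*} [CommRing O] [Algebra O K]
  (hv : v.Integers O) {p : ℕ} [hp : Fact p.Prime] [Fact ¬IsUnit (p : O)]

theorem coeff_succ_sq_ne_zero {f : PreTilt O p} {n : ℕ} (hf : coeff n f ≠ 0) :
    coeff (n + 1) f ^ 2 ≠ 0 := by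
  rw [← coeff_pow_p] at hf
  exact fun h => hf (pow_eq_zero_of_le hp.out.two_le h)

include hv

theorem val_eq_preVal_coeff_pow {f : PreTilt O p} {n : ℕ} (hf : coeff n f ≠ 0) :
    val K v O hv p f = ModP.preVal K v O p (coeff n f) ^ p ^ n :=
  valAux_eq hv hf

theorem val_eq_of_coeff_eq_mk {f : PreTilt O p} {n : ℕ} {z : O}
    (hf : coeff n f = Ideal.Quotient.mk _ z) (hz : v p < v (algebraMap O K z)) :
    val K v O hv p f = v (algebraMap O K z) ^ p ^ n := by
  have hz0 := (ModP.v_p_lt_val hv).1 hz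
  rw [val_eq_preVal_coeff_pow hv (hf ▸ hz0), hf, ModP.preVal_mk hv hz0]

theorem dvd_of_forall_coeff_dvd {f g : PreTilt O p} (hdvd : ∀ n, coeff n f ∣ coeff n g)
    (hf : ∀ n, coeff n f ^ 2 ≠ 0) : f ∣ g := by
  choose c hc using hdvd
  have hcompat : ∀ n, (c (n + 2) ^ p) ^ p = c (n + 1) ^ p := by
    intro n
    have hmul : coeff (n + 1) f * (c (n + 2) ^ p - c (n + 1)) = 0 := by
      rw [mul_sub, ← hc, ← coeff_pow_p f (n + 1), ← coeff_pow_p g (n + 1), hc, mul_pow,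
        sub_self]
    have hsq := ModP.sq_eq_zero_of_mul_eq_zero hv hmul (hf _)
    rw [← sub_eq_zero, ← sub_pow_char, pow_eq_zero_of_le hp.out.two_le hsq]
  refine ⟨⟨fun n => c (n + 1) ^ p, hcompat⟩, Perfection.ext fun n => ?_⟩
  change coeff n g = coeff n f * c (n + 1) ^ p
  rw [← coeff_pow_p f, ← mul_pow, ← hc, coeff_pow_p]

theorem coeff_dvd_coeff_of_val_le {f g : PreTilt O p} {n : ℕ} (hf : coeff n f ≠ 0)
    (h : val K v O hv p g ≤ val K v O hv p f) : coeff n f ∣ coeff n g := by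
  obtain hg | hg := eq_or_ne (coeff n g) 0
  · rw [hg]; exact dvd_zero _
  refine ModP.dvd_of_preVal_le hv hf (pow_le_pow_iff_left₀ zero_le zero_le
    (pow_ne_zero n hp.out.ne_zero) |>.mp ?_)
  rwa [← val_eq_preVal_coeff_pow hv hf, ← val_eq_preVal_coeff_pow hv hg]

/-- A power of the inverse Frobenius shifts the coefficients so that all those of `f` have
nonzero square. -/
theorem dvd_of_val_le {f g : PreTilt O p} (hf : f ≠ 0)
    (h : val K v O hv p g ≤ val K v O hv p f) : f ∣ g := by
  obtain ⟨m, hm⟩ : ∃ m, coeff m f ≠ 0 := not_forall.1 fun h => hf (Perfection.ext h)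
  let e : RingAut (PreTilt O p) := (frobeniusEquiv (PreTilt O p) p).symm ^ (m + 1)
  have he : ∀ x n, coeff n (e x) = coeff (n + (m + 1)) x := fun x n => by
    rw [RingAut.coe_pow, coeff_iterate_frobeniusEquiv_symm]
  rw [← map_dvd_iff e]
  refine dvd_of_forall_coeff_dvd hv (fun n => ?_) (fun n => ?_) <;> simp only [he]
  · exact coeff_dvd_coeff_of_val_le hv (Perfection.coeff_ne_zero_of_le hm (by omega)) h
  · exact coeff_succ_sq_ne_zero (n := n + m) (Perfection.coeff_ne_zero_of_le hm (by omega))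

theorem exists_dvd_pow {θ s : PreTilt O p} (hθ : val K v O hv p θ < 1) (hs : s ≠ 0) :
    ∃ n, s ∣ θ ^ n := by
  obtain ⟨n, hn⟩ := exists_pow_lt_of_lt_one (pos_iff_ne_zero.2 ((map_eq_zero hv).not.2 hs)) hθ
  exact ⟨n, dvd_of_val_le hv hs (by rw [map_pow]; exact hn.le)⟩

end PreTilt

theorem stmt8_general (p : ℕ) [Fact p.Prime]
    (K : Type*) [Field K] (v : Valuation K ℝ≥0)
    (O : Type*) [CommRing O] [Algebra O K] (hv : v.Integers O)
    [Fact (v p ≠ 1)]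
    (ζ : ℕ → O)
    (hζprim : ∀ n : ℕ, IsPrimitiveRoot (ζ n) (p ^ n))
    (ε : PreTilt O p)
    (hε : haveI := stmt8_fact_not_isUnit p K v O hv
      ∀ n : ℕ, Perfection.coeff (ModP O p) p n ε =
      Ideal.Quotient.mk _ (ζ n)) :
    haveI := stmt8_fact_not_isUnit p K v O hv
    PreTilt.val K v O hv p (ε - 1) = (v p) ^ ((p : ℝ) / ((p : ℝ) - 1)) ∧
    PreTilt.val K v O hv p (ε - 1) < 1 ∧ ε - 1 ≠ 0 ∧
    (∀ x : FractionRing (PreTilt O p), ∃ (a : PreTilt O p) (n : ℕ),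
      x * (algebraMap (PreTilt O p) (FractionRing (PreTilt O p))
            (ε - 1)) ^ n =
        algebraMap (PreTilt O p) (FractionRing (PreTilt O p)) a) := by
  have := stmt8_fact_not_isUnit p K v O hv
  have := PreTilt.isDomain K v O hv p
  have hp : p.Prime := Fact.out
  have hξ := (hζprim 2).map_of_injective hv.hom_inj
  set T := v (algebraMap O K (ζ 2) - 1)
  have hTp : T ^ (p * (p - 1)) = v p := by simpa using hξ.valuation_sub_one_pow v (k := 1)
  have hT0 : T ≠ 0 :=
    v.ne_zero_iff.2 (sub_ne_zero.2 (hξ.ne_one (Nat.one_lt_pow two_ne_zero hp.one_lt)))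
  have hT1 : T < 1 := hξ.valuation_sub_one_lt_one v Fact.out
  have hpT : v p < T := hTp ▸ pow_lt_self_of_lt_one₀ (pos_iff_ne_zero.2 hT0) hT1
    (Nat.mul_le_mul hp.two_le (Nat.le_sub_one_of_lt hp.one_lt))
  have hval : PreTilt.val K v O hv p (ε - 1) = T ^ p ^ 2 := by
    have hz : v p < v (algebraMap O K (ζ 2 - 1)) := by rwa [map_sub, map_one]
    rw [PreTilt.val_eq_of_coeff_eq_mk hv (n := 2) ?_ hz, map_sub, map_one]
    rw [map_sub, map_one, PreTilt.coeff_def, hε, map_sub, map_one]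
  have hval1 : PreTilt.val K v O hv p (ε - 1) < 1 :=
    hval ▸ pow_lt_one₀ zero_le hT1 (pow_ne_zero 2 hp.ne_zero)
  refine ⟨?_, hval1, ?_, IsLocalization.exists_mul_pow_eq_algebraMap fun s hs =>
    PreTilt.exists_dvd_pow hv hval1 (nonZeroDivisors.ne_zero hs)⟩
  · rw [hval, NNReal.pow_eq_rpow_div_of_pow_eq
      (mul_ne_zero hp.ne_zero (Nat.sub_ne_zero_of_lt hp.one_lt)) hTp]
    have : (1 : ℝ) < p := mod_cast hp.one_lt
    congr 1
    push_cast [Nat.cast_sub hp.one_le]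
    field_simp
  · rw [Ne, ← PreTilt.map_eq_zero hv, hval]
    exact pow_ne_zero _ hT0

/-- Let `Ẽ⁺` be the tilt (perfection of `O/p`) of the ring of integers `O` of an
algebraically closed complete nonarchimedean field `K` (e.g. `ℂ_p`), and let
`ε ∈ Ẽ⁺` be the element determined by a compatible system `(ζ_{p^n})` of
primitive `p^n`-th roots of unity.  Then the valuation of `ε − 1` equals
`p/(p−1)` (multiplicatively, `val(ε−1) = v(p)^{p/(p−1)}`); in particular it is
positive (i.e. `val(ε−1) < 1` and `ε − 1 ≠ 0`), so that
`Ẽ = Ẽ⁺[(ε−1)⁻¹]` is the fraction field of `Ẽ⁺`: every element of the fraction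
field becomes integral after multiplying by a power of `ε − 1`. -/
theorem stmt8 (p : ℕ) [Fact p.Prime]
    (K : Type*) [Field K] (v : Valuation K ℝ≥0)
    (O : Type*) [CommRing O] [Algebra O K] (hv : v.Integers O)
    [Fact (v p ≠ 1)] (hvp : v p ≠ 0)
    (ζ : ℕ → O) (hζ0 : ζ 0 = 1)
    (hζprim : ∀ n : ℕ, IsPrimitiveRoot (ζ n) (p ^ n))
    (hζcompat : ∀ n : ℕ, ζ (n + 1) ^ p = ζ n)
    (ε : PreTilt O p)
    (hε : haveI := stmt8_fact_not_isUnit p K v O hv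
      ∀ n : ℕ, Perfection.coeff (ModP O p) p n ε =
      Ideal.Quotient.mk _ (ζ n)) :
    haveI := stmt8_fact_not_isUnit p K v O hv
    PreTilt.val K v O hv p (ε - 1) = (v p) ^ ((p : ℝ) / ((p : ℝ) - 1)) ∧
    PreTilt.val K v O hv p (ε - 1) < 1 ∧ ε - 1 ≠ 0 ∧
    (∀ x : FractionRing (PreTilt O p), ∃ (a : PreTilt O p) (n : ℕ),
      x * (algebraMap (PreTilt O p) (FractionRing (PreTilt O p))
            (ε - 1)) ^ n =
        algebraMap (PreTilt O p) (FractionRing (PreTilt O p)) a) :=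
  stmt8_general p K v O hv ζ hζprim ε hε
end

section
/- For m ≥ 0, the inclusion φ^m(T)·Ã⁺ ⊆ Ã⁺ ∩ φ^m(T)·B̃⁺_rig is an equality: any x ∈ Ã⁺ that is divisible by φ^m(T) in B̃⁺_rig is already divisible by φ^m(T) in Ã⁺. -/
/-!
Pull back by `φ⁻ᵐ`: if `x ∈ Ã⁺` and `x = φᵐ(T)·y`, then `x' = φ⁻ᵐ(x) = T·φ⁻ᵐ(y)` lies in `Ã⁺`,
and every `φⁿ(x')` is a multiple of `φⁿ(T) ∈ ker θ` (`n ≥ 0`). Criterion (a) gives `x' = T·z`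
with `z ∈ Ã⁺`, hence `x = φᵐ(T)·φᵐ(z)`.
-/

namespace RingAut

variable {R : Type*} [Mul R] [Add R] {s : Set R} {φ : RingAut R}

theorem pow_apply_mem_iff (h : ∀ x, φ x ∈ s ↔ x ∈ s) (n : ℕ) (x : R) :
    (φ ^ n) x ∈ s ↔ x ∈ s := by
  induction n generalizing x with
  | zero => rfl
  | succ n ih => rw [pow_succ, mul_apply, ih, h]

theorem inv_apply_mem_iff (h : ∀ x, φ x ∈ s ↔ x ∈ s) (x : R) : φ⁻¹ x ∈ s ↔ x ∈ s := by
  rw [← h, inv_apply, RingEquiv.apply_symm_apply]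

end RingAut

theorem stmt10_general (C : Type*) [CommRing C] (A B : Subring C)
    (φ : RingAut C)
    (hφA : ∀ x : C, x ∈ A ↔ φ x ∈ A)
    (k : Type*) [Field k] (θ : C →+* k)
    (T : C)
    (ha : ∀ x ∈ A, (∀ n : ℕ, (φ ^ n) x ∈ RingHom.ker θ) →
      ∃ y ∈ A, x = T * y)
    (hTker : ∀ n : ℕ, (φ ^ n) T ∈ RingHom.ker θ) :
    ∀ m : ℕ, ∀ x ∈ A, (∃ y ∈ B, x = (φ ^ m) T * y) →
      ∃ z ∈ A, x = (φ ^ m) T * z := by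
  rintro m x hxA ⟨y, -, rfl⟩
  set e := φ ^ m
  have he : ∀ z, e z ∈ (A : Set C) ↔ z ∈ (A : Set C) :=
    RingAut.pow_apply_mem_iff (fun z => (hφA z).symm) m
  have hpull : e⁻¹ (e T * y) = T * e⁻¹ y := by simp
  have hpullA : T * e⁻¹ y ∈ A := hpull ▸ (RingAut.inv_apply_mem_iff he _).2 hxA
  obtain ⟨z, hzA, hz⟩ := ha _ hpullA fun n =>
    (RingHom.ker θ).mem_of_dvd (map_dvd _ (dvd_mul_right _ _)) (hTker n)
  refine ⟨e z, (he z).2 hzA, ?_⟩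
  calc e T * y = e (T * e⁻¹ y) := by simp
    _ = e T * e z := by rw [hz, map_mul]

/-- Corollary on divisibilities: let `Ã⁺ ⊆ B̃⁺_rig` be subrings of `B_dR⁺ = C`,
stable under the bijective Frobenius `φ`, with `θ : C →+* k`, `T ∈ Ã⁺`,
`t ∈ B̃⁺_rig`.  Assume:
(a) if `x ∈ Ã⁺` and `φ^n(x) ∈ ker θ` for all `n ≥ 0`, then `T ∣ x` in `Ã⁺`;
(b) if `x ∈ B̃⁺_rig` and `φ^n(x) ∈ ker θ` for all `n ∈ ℤ`, then `t ∣ x` in `B̃⁺_rig`;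
together with: `φ^n(T) ∣ t` in `C` for `n ≥ 0`, `φ^n(T)` is a unit in `C` for
`n < 0`, and `φ^n(T) ∈ ker θ` for `n ≥ 0`.
Then for every `m ≥ 0`, the inclusion `φ^m(T)·Ã⁺ ⊆ Ã⁺ ∩ φ^m(T)·B̃⁺_rig` is an
equality: any `x ∈ Ã⁺` divisible by `φ^m(T)` in `B̃⁺_rig` is divisible by
`φ^m(T)` in `Ã⁺`. -/
theorem stmt10 (C : Type*) [CommRing C] (A B : Subring C) (hAB : A ≤ B)
    (φ : RingAut C)
    (hφA : ∀ x : C, x ∈ A ↔ φ x ∈ A) (hφB : ∀ x : C, x ∈ B ↔ φ x ∈ B)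
    (k : Type*) [Field k] (θ : C →+* k)
    (T : C) (hTA : T ∈ A) (t : C) (htB : t ∈ B)
    (ha : ∀ x ∈ A, (∀ n : ℕ, (φ ^ n) x ∈ RingHom.ker θ) →
      ∃ y ∈ A, x = T * y)
    (hb : ∀ x ∈ B, (∀ n : ℤ, (φ ^ n) x ∈ RingHom.ker θ) →
      ∃ y ∈ B, x = t * y)
    (hTdvd : ∀ n : ℕ, (φ ^ n) T ∣ t)
    (hTunit : ∀ n : ℤ, n < 0 → IsUnit ((φ ^ n) T))
    (hTker : ∀ n : ℕ, (φ ^ n) T ∈ RingHom.ker θ) :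
    ∀ m : ℕ, ∀ x ∈ A, (∃ y ∈ B, x = (φ ^ m) T * y) →
      ∃ z ∈ A, x = (φ ^ m) T * z :=
  stmt10_general C A B φ hφA k θ T ha hTker
end

section
/- Let π be given in a Kirillov-type model where the mirabolic acts on functions φ : Q_p^× → C by ([[a,b],[0,d]]φ)(x) = δ(d) e^{2πi(b/d)x} φ((a/d)x). Suppose φ(x) = γ^{ord_p(x)} 1_{Z_p}(x) with γ ≠ 1. Define ξ(x) = γ^{ord_p(x)}/(1−γ) for x ∈ Z_p and ξ(x) = 1/(1−γ) otherwise. Then (1 − [[p,0],[0,1]])ξ = φ, and for any i > 0, ∫_{Z_p^×} ξ(p^{-i}x) d^×x = 1/(1−γ) = Z(φ,1), where Z(φ,s) = ∫_{Q_p^×} |x|^{s−1} φ(x) d^×x (evaluated by analytic continuation of the geometric series Σ_{n≥0} p^{-n(s−1)} γ^n). -/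
/-!
Everything is read off the valuation `v = ord_p x`: since `‖x‖ ≤ 1 ↔ 0 ≤ v`, the function `ξ`
is `v ↦ γ^v/(1-γ)` on `v ≥ 0` and the constant `1/(1-γ)` on `v < 0`, and multiplying by `p`
shifts `v` by one. The difference `ξ(x) - ξ(px)` is then `γ^v (1-γ)/(1-γ) = γ^v` for `v ≥ 0`,
and vanishes for `v < 0` (at `v = -1` because `γ^0/(1-γ) = 1/(1-γ)`). Units scaled by `p^{-i}`
have valuation `-i < 0`, and `φ(p^n) = γ^n` turns `Z(φ,1)` into the geometric series.
-/

open Padic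

noncomputable def truncGeom (γ : ℂ) (v : ℤ) : ℂ :=
  if 0 ≤ v then γ ^ v / (1 - γ) else 1 / (1 - γ)

lemma truncGeom_of_neg (γ : ℂ) {v : ℤ} (hv : v < 0) : truncGeom γ v = 1 / (1 - γ) :=
  if_neg hv.not_ge

lemma truncGeom_sub_truncGeom_add_one {γ : ℂ} (hγ : γ ≠ 1) (v : ℤ) :
    truncGeom γ v - truncGeom γ (v + 1) = if 0 ≤ v then γ ^ v else 0 := by
  have h1γ : 1 - γ ≠ 0 := sub_ne_zero.mpr hγ.symm
  unfold truncGeom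
  rcases lt_trichotomy v (-1) with hv | rfl | hv
  · simp only [if_neg (by omega : ¬ 0 ≤ v), if_neg (by omega : ¬ 0 ≤ v + 1), sub_self]
  · norm_num
  · lift v to ℕ using (by omega : 0 ≤ v)
    simp only [Nat.cast_nonneg, if_true, (by omega : (0 : ℤ) ≤ v + 1)]
    rw [← Nat.cast_succ, zpow_natCast, zpow_natCast, pow_succ]
    field_simp

namespace Padic

variable {p : ℕ} [Fact p.Prime]

lemma natCast_p_ne_zero : (p : ℚ_[p]) ≠ 0 :=
  Nat.cast_ne_zero.mpr (Fact.out : p.Prime).ne_zero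

lemma valuation_eq_zero_of_norm_eq_one {x : ℚ_[p]} (hx : ‖x‖ = 1) : x.valuation = 0 := by
  have h₁ := (norm_le_one_iff_val_nonneg x).mp hx.le
  have h₂ := (norm_le_one_iff_val_nonneg x⁻¹).mp (by rw [norm_inv, hx, inv_one])
  rw [valuation_inv] at h₂
  omega

lemma valuation_p_mul {x : ℚ_[p]} (hx : x ≠ 0) :
    ((p : ℚ_[p]) * x).valuation = x.valuation + 1 := by
  rw [valuation_mul natCast_p_ne_zero hx, valuation_p, add_comm]

lemma valuation_p_pow (n : ℕ) : ((p : ℚ_[p]) ^ n).valuation = n := by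
  rw [valuation_pow, valuation_p, mul_one]

lemma valuation_inv_p_pow_mul_of_norm_eq_one (i : ℕ) {x : ℚ_[p]} (hx : ‖x‖ = 1) :
    (((p : ℚ_[p]) ^ i)⁻¹ * x).valuation = -i := by
  have hx0 : x ≠ 0 := norm_ne_zero_iff.mp (by rw [hx]; exact one_ne_zero)
  rw [valuation_mul (inv_ne_zero (pow_ne_zero i natCast_p_ne_zero)) hx0, valuation_inv,
    valuation_p_pow, valuation_eq_zero_of_norm_eq_one hx, add_zero]

end Padic

/-- Inverting `1 − [[p,0],[0,1]]` in a Kirillov model on a single geometric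
piece: let `γ ≠ 1`, `φ(x) = γ^{ord_p(x)}·1_{Z_p}(x)` and
`ξ(x) = γ^{ord_p(x)}/(1−γ)` for `x ∈ Z_p`, `ξ(x) = 1/(1−γ)` otherwise.  Then
`(1 − [[p,0],[0,1]])ξ = φ`, i.e. `ξ(x) − ξ(px) = φ(x)`; for `i > 0` one has
`ξ(p^{-i}x) = 1/(1−γ)` for all units `x` (so the integral of `ξ(p^{-i}·)` over
`Z_p^×` is `1/(1−γ)`), and `Z(φ,1) = Σ_{n≥0} γ^n = 1/(1−γ)` (evaluated by
analytic continuation of the geometric series, which converges to this value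
when `‖γ‖ < 1`). -/
theorem stmt11 (p : ℕ) [Fact p.Prime] (γ : ℂ) (hγ : γ ≠ 1)
    (φ ξ : ℚ_[p] → ℂ)
    (hφ : ∀ x : ℚ_[p], x ≠ 0 →
      φ x = if ‖x‖ ≤ 1 then γ ^ x.valuation else 0)
    (hξ : ∀ x : ℚ_[p], x ≠ 0 →
      ξ x = if ‖x‖ ≤ 1 then γ ^ x.valuation / (1 - γ) else 1 / (1 - γ)) :
    (∀ x : ℚ_[p], x ≠ 0 → ξ x - ξ ((p : ℚ_[p]) * x) = φ x) ∧
    (∀ i : ℕ, 0 < i → ∀ x : ℚ_[p], ‖x‖ = 1 →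
      ξ (((p : ℚ_[p]) ^ i)⁻¹ * x) = 1 / (1 - γ)) ∧
    (‖γ‖ < 1 → HasSum (fun n : ℕ => φ ((p : ℚ_[p]) ^ n)) (1 / (1 - γ))) := by
  have hp0 : (p : ℚ_[p]) ≠ 0 := natCast_p_ne_zero
  have hξv : ∀ x : ℚ_[p], x ≠ 0 → ξ x = truncGeom γ x.valuation := fun x hx => by
    simp only [hξ x hx, truncGeom, norm_le_one_iff_val_nonneg]
  have hφv : ∀ x : ℚ_[p], x ≠ 0 → φ x = if 0 ≤ x.valuation then γ ^ x.valuation else 0 :=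
    fun x hx => by simp only [hφ x hx, norm_le_one_iff_val_nonneg]
  refine ⟨fun x hx => ?_, fun i hi x hx => ?_, fun hγn => ?_⟩
  · rw [hξv x hx, hξv _ (mul_ne_zero hp0 hx), valuation_p_mul hx, hφv x hx,
      truncGeom_sub_truncGeom_add_one hγ]
  · have hx0 : x ≠ 0 := norm_ne_zero_iff.mp (by rw [hx]; exact one_ne_zero)
    rw [hξv _ (mul_ne_zero (inv_ne_zero (pow_ne_zero i hp0)) hx0),
      valuation_inv_p_pow_mul_of_norm_eq_one i hx, truncGeom_of_neg]
    omega
  · have hφ_pow : ∀ n : ℕ, φ ((p : ℚ_[p]) ^ n) = γ ^ n := fun n => by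
      rw [hφv _ (pow_ne_zero n hp0), valuation_p_pow, if_pos (Nat.cast_nonneg n), zpow_natCast]
    simpa only [hφ_pow, one_div] using hasSum_geometric_of_norm_lt_one hγn
end

section
/- Let v_new be the newvector in a smooth GL_2(Q_p)-representation, and suppose it satisfies Σ_{i=0}^{p−1} [[p,i],[0,1]] v_new + δ [[p^{-1},0],[0,1]] v_new = a·v_new. Then for d_n := [[1,1],[0,1]][[p^n,0],[0,1]] v_new one has Σ_{i=0}^{p−1} [[1+ip^n,0],[0,1]] d_{n+1} = a·d_n − δ·d_{n−1} for all n ≥ 1. -/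
open scoped Classical

/-- The upper-triangular matrix `[[a,b],[0,1]] ∈ GL_2(ℚ_p)` (defined to be the
identity if `a = 0`, a case never used below). -/
noncomputable def glUT (p : ℕ) [Fact p.Prime] (a b : ℚ_[p]) : GL (Fin 2) ℚ_[p] :=
  if h : a ≠ 0 then
    Matrix.GeneralLinearGroup.mkOfDetNeZero !![a, b; 0, 1]
      (by simpa [Matrix.det_fin_two_of] using h)
  else 1

lemma glUT_coe (p : ℕ) [Fact p.Prime] (a b : ℚ_[p]) (h : a ≠ 0) :
    (glUT p a b : Matrix (Fin 2) (Fin 2) ℚ_[p]) = !![a, b; 0, 1] := by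
  rw [glUT, dif_pos h]; rfl

lemma glUT_mul (p : ℕ) [Fact p.Prime] (a b c d : ℚ_[p]) (ha : a ≠ 0) (hc : c ≠ 0) :
    glUT p a b * glUT p c d = glUT p (a * c) (a * d + b) := by
  apply Units.ext
  push_cast
  rw [glUT_coe p a b ha, glUT_coe p c d hc, glUT_coe p _ _ (mul_ne_zero ha hc)]
  ext i j
  fin_cases i <;> fin_cases j <;> simp [Matrix.mul_apply, Fin.sum_univ_two]

lemma norm_one_add (p : ℕ) [Fact p.Prime] (i n : ℕ) (hn : 1 ≤ n) :
    ‖(1 + (i : ℚ_[p]) * (p : ℚ_[p]) ^ n)‖ = 1 := by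
  have hp1 : (1:ℝ) < p := by exact_mod_cast (Fact.out : p.Prime).one_lt
  have hlt : ‖(i : ℚ_[p]) * (p : ℚ_[p]) ^ n‖ < 1 := by
    calc ‖(i : ℚ_[p]) * (p : ℚ_[p]) ^ n‖ ≤ 1 * ‖(p : ℚ_[p]) ^ n‖ := by
          rw [norm_mul]
          exact mul_le_mul_of_nonneg_right
            (by exact_mod_cast Padic.norm_int_le_one (i : ℤ)) (norm_nonneg _)
      _ = ((p : ℝ) ^ n)⁻¹ := by
          rw [one_mul, norm_pow, Padic.norm_p, inv_pow]
      _ < 1 := by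
          rw [inv_lt_one_iff₀]
          right
          exact one_lt_pow₀ hp1 (by omega)
  have h := Padic.add_eq_max_of_ne (q := (1 : ℚ_[p]))
      (r := (i : ℚ_[p]) * (p : ℚ_[p]) ^ n) (by rw [norm_one]; exact ne_of_gt hlt)
  rw [h, norm_one, max_eq_left hlt.le]

/-- Three-term corestriction relation from the Hecke relation: in a
representation of `GL_2(ℚ_p)`, if the newvector `v` satisfies
`Σ_{i=0}^{p−1} [[p,i],[0,1]]v + δ·[[p^{-1},0],[0,1]]v = a·v`, is fixed by
`[[1,1],[0,1]]` and by `[[u,0],[0,1]]` for `u ∈ ℤ_p^×`, then setting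
`d_n := [[1,1],[0,1]][[p^n,0],[0,1]]v` one has
`Σ_{i=0}^{p−1} [[1+ip^n,0],[0,1]]·d_{n+1} = a·d_n − δ·d_{n−1}` for all `n ≥ 1`. -/
theorem stmt15 (p : ℕ) [Fact p.Prime]
    (K : Type*) [Field K] (V : Type*) [AddCommGroup V] [Module K V]
    [DistribMulAction (GL (Fin 2) ℚ_[p]) V]
    [SMulCommClass (GL (Fin 2) ℚ_[p]) K V]
    (v : V) (a δ : K)
    (hHecke : (∑ i ∈ Finset.range p, glUT p (p : ℚ_[p]) (i : ℚ_[p]) • v) +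
        δ • (glUT p ((p : ℚ_[p])⁻¹) 0 • v) = a • v)
    (hN : glUT p 1 1 • v = v)
    (hdiag : ∀ u : ℚ_[p], ‖u‖ = 1 → glUT p u 0 • v = v) :
    ∀ n : ℕ, 1 ≤ n →
      (∑ i ∈ Finset.range p,
          glUT p (1 + (i : ℚ_[p]) * (p : ℚ_[p]) ^ n) 0 •
            (glUT p 1 1 • (glUT p ((p : ℚ_[p]) ^ (n + 1)) 0 • v))) =
        a • (glUT p 1 1 • (glUT p ((p : ℚ_[p]) ^ n) 0 • v)) -
          δ • (glUT p 1 1 • (glUT p ((p : ℚ_[p]) ^ (n - 1)) 0 • v)) := by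
  intro n hn
  have hp0 : (p : ℚ_[p]) ≠ 0 := by
    exact_mod_cast Nat.cast_ne_zero.mpr (Fact.out : p.Prime).ne_zero
  have hpn : ∀ m : ℕ, ((p : ℚ_[p]) ^ m) ≠ 0 := fun m => pow_ne_zero m hp0
  have hu : ∀ i : ℕ, (1 + (i : ℚ_[p]) * (p : ℚ_[p]) ^ n) ≠ 0 := fun i => by
    intro h
    have := norm_one_add p i n hn
    rw [h, norm_zero] at this
    norm_num at this
  -- matrix identity
  have key : ∀ i : ℕ,
      glUT p (1 + (i : ℚ_[p]) * (p : ℚ_[p]) ^ n) 0 * glUT p 1 1 *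
        glUT p ((p : ℚ_[p]) ^ (n + 1)) 0 =
      glUT p 1 1 * glUT p ((p : ℚ_[p]) ^ n) 0 * glUT p (p : ℚ_[p]) (i : ℚ_[p]) *
        glUT p (1 + (i : ℚ_[p]) * (p : ℚ_[p]) ^ n) 0 := fun i => by
    rw [glUT_mul p _ _ _ _ (hu i) one_ne_zero,
        glUT_mul p _ _ _ _ (mul_ne_zero (hu i) one_ne_zero) (hpn (n + 1)),
        glUT_mul p _ _ _ _ one_ne_zero (hpn n),
        glUT_mul p _ _ _ _ (mul_ne_zero one_ne_zero (hpn n)) hp0,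
        glUT_mul p _ _ _ _ (mul_ne_zero (mul_ne_zero one_ne_zero (hpn n)) hp0) (hu i)]
    congr 1 <;> ring
  have step : ∀ i : ℕ,
      glUT p (1 + (i : ℚ_[p]) * (p : ℚ_[p]) ^ n) 0 •
          (glUT p 1 1 • (glUT p ((p : ℚ_[p]) ^ (n + 1)) 0 • v)) =
        glUT p 1 1 • (glUT p ((p : ℚ_[p]) ^ n) 0 •
          (glUT p (p : ℚ_[p]) (i : ℚ_[p]) • v)) := fun i => by
    rw [← mul_smul, ← mul_smul, key i]
    simp only [mul_smul]
    rw [hdiag _ (norm_one_add p i n hn)]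
  rw [Finset.sum_congr rfl fun i _ => step i, ← Finset.smul_sum, ← Finset.smul_sum]
  have hHecke' : (∑ i ∈ Finset.range p, glUT p (p : ℚ_[p]) (i : ℚ_[p]) • v) =
      a • v - δ • (glUT p ((p : ℚ_[p])⁻¹) 0 • v) := by
    rw [eq_sub_iff_add_eq]; exact hHecke
  rw [hHecke']
  have hpow : glUT p ((p : ℚ_[p]) ^ n) 0 * glUT p ((p : ℚ_[p])⁻¹) 0 =
      glUT p ((p : ℚ_[p]) ^ (n - 1)) 0 := by
    have hpp : (p : ℚ_[p]) ^ n * (p : ℚ_[p])⁻¹ = (p : ℚ_[p]) ^ (n - 1) := by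
      obtain ⟨m, rfl⟩ := Nat.exists_eq_add_of_le hn
      rw [pow_add, pow_one]
      field_simp
      rw [Nat.add_sub_cancel_left]
    rw [glUT_mul p _ _ _ _ (hpn n) (inv_ne_zero hp0), mul_zero, add_zero, hpp]
  rw [smul_sub, smul_sub, smul_comm (glUT p ((p : ℚ_[p]) ^ n) 0) a,
      smul_comm (glUT p 1 1) a, smul_comm (glUT p ((p : ℚ_[p]) ^ n) 0) δ,
      smul_comm (glUT p 1 1) δ,
      ← mul_smul (glUT p ((p : ℚ_[p]) ^ n) 0) (glUT p ((p : ℚ_[p])⁻¹) 0), hpow]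
end
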